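/- arXiv:1209.1873 — 4 statements merged into one kernel-verified Lean document; each statement's English description precedes it below -/
import Mathlib

section
/- SDCA with good initialization (Theorem 4, conditional form): Assume each φ_i is L-Lipschitz, together with the standing assumptions. Run the SDCA process from an initialization α^(0) ∈ ℝⁿ (with φ_i*(−α^(0)_i) < ∞ for all i) satisfying D(α*) − D(α^(0)) ≤ 2L² log(en)/(λn) (as is guaranteed in expectation by one epoch of Modified-SGD). Let ε_P > 0, and let T_0, T be integers with T_0 ≥ ⌈n log(log(en))⌉ + 16L²/(λ ε_P) and T − T_0 ≥ n + 4L²/(λ ε_P). Let ᾱ = (1/(T−T_0))∑_{t=T_0+1}^{T} α^(t−1) and w̄ = w(ᾱ). Then E[P(w̄) − D(ᾱ)] ≤ ε_P, and for every t ≥ T_0, E[D(α*) − D(α^(t))] ≤ ε_P/2. -/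
/-!
Each SDCA step raises the dual objective, in expectation over the chosen coordinate, by at least
`(s / n) * gap - (s / n) ^ 2 * 2L² / λ` for every `s ∈ [0, 1]`: the step is at least as good as
moving the coordinate a fraction `s` of the way to minus a subgradient of `φ_i` at the current
margin, and `φ_i*` is convex with domain in `[-L, L]`. Since the duality gap dominates
the dual suboptimality `ε_t`, this gives `ε_{t+1} ≤ (1 - s / n) ε_t + (s / n) ^ 2 * 2L² / λ`.
With `s = 1` the initial suboptimality `2L² log(en) / (λn)` falls below `4L² / (λn)` after
`n log(log(en))` steps, and from then on `s = 2n / (2n + k)` gives `ε ≤ 8L² / (λ(2n + k))` after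
`k` more steps. Finally the duality gap is convex on the dual feasible set, so the gap of the
averaged iterate is at most the average gap, and the progress inequality with `s = n / (T - T₀)`
bounds the latter by a telescoping sum.
-/

open scoped BigOperators RealInnerProductSpace
open Finset

/-- The convex conjugate `φ*(u) = sup_z (z*u - φ z)` (as a real number; junk value
when the supremum is not finite). -/
noncomputable def fconj (φ : ℝ → ℝ) (u : ℝ) : ℝ := ⨆ z : ℝ, (z * u - φ z)

/-- `φ*(u) < ∞`, i.e. the defining supremum of the conjugate is finite. -/
def FiniteConj (φ : ℝ → ℝ) (u : ℝ) : Prop :=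
  BddAbove (Set.range fun z => z * u - φ z)

/-- `g ∈ ∂φ(a)`: `g` is a subgradient of `φ` at `a`. -/
def IsSubgrad (φ : ℝ → ℝ) (a g : ℝ) : Prop :=
  ∀ b, φ a + g * (b - a) ≤ φ b

/-- `u ∈ ∂φ*(b)`: `u` is a subgradient of the conjugate `φ*` at `b`
(the subgradient inequality being required at all points where `φ*` is finite). -/
def ConjSubgrad (φ : ℝ → ℝ) (b u : ℝ) : Prop :=
  FiniteConj φ b ∧ ∀ v, FiniteConj φ v → fconj φ b + u * (v - b) ≤ fconj φ v

/-- Dual feasibility: `φ_i*(-α_i) < ∞` for all `i`. -/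
def Feas {n : ℕ} (φ : Fin n → ℝ → ℝ) (α : Fin n → ℝ) : Prop :=
  ∀ i, FiniteConj (φ i) (-(α i))

/-- `w(α) = (1/(λ n)) ∑ι α_i x_i`. -/
noncomputable def wvec {n d : ℕ} (lam : ℝ) (x : Fin n → EuclideanSpace ℝ (Fin d))
    (α : Fin n → ℝ) : EuclideanSpace ℝ (Fin d) :=
  (1 / (lam * (n : ℝ))) • ∑ i, α i • x i

/-- The primal objective `P(w)`. -/
noncomputable def primalObj {n d : ℕ} (lam : ℝ) (x : Fin n → EuclideanSpace ℝ (Fin d))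
    (φ : Fin n → ℝ → ℝ) (w : EuclideanSpace ℝ (Fin d)) : ℝ :=
  (1 / (n : ℝ)) * ∑ i, φ i ⟪x i, w⟫ + lam / 2 * ‖w‖ ^ 2

/-- The dual objective `D(α)`. -/
noncomputable def dualObj {n d : ℕ} (lam : ℝ) (x : Fin n → EuclideanSpace ℝ (Fin d))
    (φ : Fin n → ℝ → ℝ) (α : Fin n → ℝ) : ℝ :=
  (1 / (n : ℝ)) * ∑ i, -(fconj (φ i) (-(α i))) - lam / 2 * ‖wvec lam x α‖ ^ 2

/-- The SDCA trajectory: `α^(0) = α0`, `α^(t+1) = step α^(t) (idx t)`. -/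
noncomputable def traj {n : ℕ} (step : (Fin n → ℝ) → Fin n → (Fin n → ℝ))
    (α0 : Fin n → ℝ) (idx : ℕ → Fin n) : ℕ → (Fin n → ℝ)
  | 0 => α0
  | t + 1 => step (traj step α0 idx t) (idx t)

/-- Expectation over the first `t` coordinates of a uniformly random i.i.d. index
sequence, applied to a function `g` of the index sequence (which should depend
only on the first `t` indices). -/
noncomputable def ExpIdx {n : ℕ} (hn : 0 < n) (t : ℕ) (g : (ℕ → Fin n) → ℝ) : ℝ :=
  (∑ idx : Fin t → Fin n,
      g (fun k => if h : k < t then idx ⟨k, h⟩ else (⟨0, hn⟩ : Fin n))) / (n : ℝ) ^ t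

open Real

theorem ConvexOn.sum {𝕜 E β ι : Type*} [Semiring 𝕜] [PartialOrder 𝕜] [AddCommMonoid E]
    [SMul 𝕜 E] [AddCommMonoid β] [PartialOrder β] [IsOrderedAddMonoid β] [Module 𝕜 β]
    {s : Set E} (hs : Convex 𝕜 s) (t : Finset ι) {f : ι → E → β}
    (hf : ∀ i ∈ t, ConvexOn 𝕜 s (f i)) : ConvexOn 𝕜 s fun v => ∑ i ∈ t, f i v := by
  classical
  induction t using Finset.induction_on with
  | empty => simpa using convexOn_const 0 hs
  | insert i t hi ih =>
    simp only [sum_insert hi]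
    exact (hf i (mem_insert_self i t)).add (ih fun j hj => hf j (mem_insert_of_mem hj))

section ConvexConjugate

variable {φ : ℝ → ℝ} {a g u L M : ℝ}

theorem le_fconj (h : FiniteConj φ u) (z : ℝ) : z * u - φ z ≤ fconj φ u :=
  le_ciSup h z

theorem finiteConj_of_forall_le (h : ∀ z, z * u - φ z ≤ M) : FiniteConj φ u :=
  ⟨M, Set.forall_mem_range.2 h⟩

theorem convexOn_fconj : ConvexOn ℝ {u | FiniteConj φ u} (fconj φ) := by
  have key : ∀ ⦃u⦄, FiniteConj φ u → ∀ ⦃v⦄, FiniteConj φ v → ∀ ⦃a b : ℝ⦄, 0 ≤ a → 0 ≤ b →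
      a + b = 1 → ∀ z, z * (a • u + b • v) - φ z ≤ a • fconj φ u + b • fconj φ v := by
    intro u hu v hv a b ha hb hab z
    calc z * (a • u + b • v) - φ z = a * (z * u - φ z) + b * (z * v - φ z) := by
          simp only [smul_eq_mul]; linear_combination φ z * hab
      _ ≤ a • fconj φ u + b • fconj φ v := by
          simp only [smul_eq_mul]; gcongr <;> exact le_fconj ‹_› z
  exact ⟨fun u hu v hv a b ha hb hab => finiteConj_of_forall_le (key hu hv ha hb hab),
    fun u hu v hv a b ha hb hab => ciSup_le (key hu hv ha hb hab)⟩

theorem IsSubgrad.finiteConj (h : IsSubgrad φ a g) : FiniteConj φ g :=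
  finiteConj_of_forall_le (M := g * a - φ a) fun z => by linear_combination h z

theorem IsSubgrad.fconj_eq (h : IsSubgrad φ a g) : fconj φ g = g * a - φ a :=
  le_antisymm (ciSup_le fun z => by linear_combination h z)
    (by linarith [le_fconj h.finiteConj a, mul_comm a g])

theorem ConvexOn.isSubgrad_rightDeriv (hφ : ConvexOn ℝ Set.univ φ) (a : ℝ) :
    IsSubgrad φ a (derivWithin φ (Set.Ioi a) a) := by
  have ha : a ∈ interior (Set.univ : Set ℝ) := by simp
  intro b
  rcases lt_trichotomy a b with hab | rfl | hab
  · have h := hφ.rightDeriv_le_slope_of_mem_interior ha (Set.mem_univ b) hab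
    rw [slope_def_field, le_div_iff₀ (sub_pos.2 hab)] at h
    linarith
  · simp
  · have h := hφ.slope_le_leftDeriv_of_mem_interior (Set.mem_univ b) ha hab
    rw [slope_def_field, div_le_iff₀ (sub_pos.2 hab)] at h
    nlinarith [mul_le_mul_of_nonneg_right (hφ.leftDeriv_le_rightDeriv_of_mem_interior ha)
      (sub_pos.2 hab).le]

/-- For an `L`-Lipschitz `φ`, `z * u - φ z ≥ t * (|u| - L) - φ 0` along `z = ± t`, which is
unbounded when `|u| > L`. -/
theorem abs_le_of_finiteConj (hL : ∀ a b, |φ a - φ b| ≤ L * |a - b|) (h : FiniteConj φ u) :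
    |u| ≤ L := by
  obtain ⟨M, hM⟩ := h
  by_contra! hu
  set t := |M + φ 0| / (|u| - L) + 1 with ht_def
  have ht : 0 < t := by positivity
  obtain ⟨z, hzu, hz⟩ : ∃ z, z * u = t * |u| ∧ |z| = t := by
    rcases le_or_gt 0 u with h | h
    · exact ⟨t, by rw [abs_of_nonneg h], abs_of_pos ht⟩
    · exact ⟨-t, by rw [abs_of_neg h]; ring, by rw [abs_neg, abs_of_pos ht]⟩
  have hMz : z * u - φ z ≤ M := hM ⟨z, rfl⟩
  have hφz : φ z ≤ φ 0 + L * t := by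
    have := (abs_le.1 (hL z 0)).2
    rw [sub_zero, hz] at this
    linarith
  have hgrowth : t * (|u| - L) = |M + φ 0| + (|u| - L) := by
    rw [ht_def]; field_simp
  nlinarith [le_abs_self (M + φ 0)]

end ConvexConjugate

section DualObjective

variable {n d : ℕ} {lam : ℝ} {x : Fin n → EuclideanSpace ℝ (Fin d)} {φ : Fin n → ℝ → ℝ}

noncomputable def dualityGap (lam : ℝ) (x : Fin n → EuclideanSpace ℝ (Fin d))
    (φ : Fin n → ℝ → ℝ) (α : Fin n → ℝ) : ℝ :=
  primalObj lam x φ (wvec lam x α) - dualObj lam x φ α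

noncomputable def wvecₗ (lam : ℝ) (x : Fin n → EuclideanSpace ℝ (Fin d)) :
    (Fin n → ℝ) →ₗ[ℝ] EuclideanSpace ℝ (Fin d) :=
  (1 / (lam * n)) • Fintype.linearCombination ℝ x

theorem wvecₗ_apply (α : Fin n → ℝ) : wvecₗ lam x α = wvec lam x α := by
  simp [wvecₗ, wvec, Fintype.linearCombination_apply]

theorem wvec_update (α : Fin n → ℝ) (i : Fin n) (c : ℝ) :
    wvec lam x (Function.update α i c) = wvec lam x α + ((c - α i) / (lam * n)) • x i := by
  have hupd : Function.update α i c = α + Pi.single i (c - α i) := by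
    ext j
    rcases eq_or_ne j i with rfl | h <;> simp [*]
  rw [← wvecₗ_apply, hupd, map_add, wvecₗ_apply]
  simp [wvecₗ, Fintype.linearCombination_apply_single, smul_smul, div_eq_mul_inv, mul_comm]

theorem mul_inner_wvec (hlam : lam ≠ 0) (α : Fin n → ℝ) (v : EuclideanSpace ℝ (Fin d)) :
    lam * ⟪wvec lam x α, v⟫ = (1 / n) * ∑ i, α i * ⟪x i, v⟫ := by
  simp only [wvec, real_inner_smul_left, sum_inner]
  rw [← mul_assoc, one_div, one_div, mul_inv, ← mul_assoc, mul_inv_cancel₀ hlam, one_mul]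

theorem dualityGap_eq (hlam : lam ≠ 0) (α : Fin n → ℝ) :
    dualityGap lam x φ α = (1 / n) * ∑ i, (φ i ⟪x i, wvec lam x α⟫ + fconj (φ i) (-α i)
      + α i * ⟪x i, wvec lam x α⟫) := by
  have h := mul_inner_wvec (x := x) hlam α (wvec lam x α)
  rw [real_inner_self_eq_norm_sq] at h
  simp only [dualityGap, primalObj, dualObj, sum_add_distrib, sum_neg_distrib, mul_add]
  linarith

theorem dualObj_le_primalObj (hlam : 0 < lam) {β : Fin n → ℝ} (hβ : Feas φ β)
    (w : EuclideanSpace ℝ (Fin d)) : dualObj lam x φ β ≤ primalObj lam x φ w := by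
  have hFY : ∑ i, -fconj (φ i) (-β i) ≤ ∑ i, φ i ⟪x i, w⟫ + ∑ i, β i * ⟪x i, w⟫ := by
    rw [← sum_add_distrib]
    exact sum_le_sum fun i _ => by linarith [le_fconj (hβ i) ⟪x i, w⟫]
  have hinner := mul_inner_wvec (x := x) hlam.ne' β w
  have hsq : 0 ≤ lam / 2 * ‖w - wvec lam x β‖ ^ 2 := by positivity
  rw [norm_sub_sq_real, real_inner_comm] at hsq
  simp only [dualObj, primalObj]
  nlinarith [mul_le_mul_of_nonneg_left hFY (by positivity : (0 : ℝ) ≤ 1 / n)]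

theorem dualObj_update_sub (hlam : lam ≠ 0) (α : Fin n → ℝ) (i : Fin n) (c : ℝ) :
    dualObj lam x φ (Function.update α i c) - dualObj lam x φ α
      = (fconj (φ i) (-α i) - fconj (φ i) (-c)) / n - (c - α i) * ⟪x i, wvec lam x α⟫ / n
        - (c - α i) ^ 2 * ‖x i‖ ^ 2 / (2 * lam * n ^ 2) := by
  have hn : (n : ℝ) ≠ 0 := Nat.cast_ne_zero.2 (Fin.pos i).ne'
  have hsum : ∑ j, -fconj (φ j) (-Function.update α i c j)
      = ∑ j, -fconj (φ j) (-α j) + (fconj (φ i) (-α i) - fconj (φ i) (-c)) := by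
    rw [← add_sum_erase _ _ (mem_univ i), ← add_sum_erase _ _ (mem_univ i),
      sum_congr rfl fun j hj => by rw [Function.update_of_ne (ne_of_mem_erase hj)]]
    simp only [Function.update_self]
    ring
  have hnorm := norm_add_sq_real (wvec lam x α) (((c - α i) / (lam * n)) • x i)
  rw [real_inner_smul_right, norm_smul, mul_pow, Real.norm_eq_abs, sq_abs,
    real_inner_comm] at hnorm
  simp only [dualObj, wvec_update, hsum, hnorm]
  field_simp
  ring

end DualObjective

section Convexity

variable {n d : ℕ} {lam : ℝ} {x : Fin n → EuclideanSpace ℝ (Fin d)} {φ : Fin n → ℝ → ℝ}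

theorem convexOn_primalObj (hconv : ∀ i, ConvexOn ℝ Set.univ (φ i)) (hlam : 0 ≤ lam) :
    ConvexOn ℝ Set.univ (primalObj lam x φ) := by
  have hloss : ∀ i, ConvexOn ℝ Set.univ fun w => φ i ⟪x i, w⟫ := fun i =>
    (hconv i).comp_linearMap (innerₛₗ ℝ (x i))
  have hsq : ConvexOn ℝ Set.univ fun w : EuclideanSpace ℝ (Fin d) => ‖w‖ ^ 2 :=
    convexOn_univ_norm.pow (fun _ _ => norm_nonneg _) 2
  exact ((ConvexOn.sum convex_univ univ fun i _ => hloss i).smul (by positivity)).add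
    (hsq.smul (by positivity))

theorem convex_setOf_feas : Convex ℝ {α : Fin n → ℝ | Feas φ α} := by
  intro α hα β hβ a b ha hb hab i
  simpa [mul_neg, neg_add, add_comm] using convexOn_fconj.1 (hα i) (hβ i) ha hb hab

theorem convexOn_neg_dualObj (hlam : 0 ≤ lam) :
    ConvexOn ℝ {α | Feas φ α} fun α => -dualObj lam x φ α := by
  have hconj : ∀ i, ConvexOn ℝ {α | Feas φ α} fun α => fconj (φ i) (-α i) := fun i =>
    (convexOn_fconj.comp_linearMap (-LinearMap.proj i)).subset (fun _ hα => by simpa using hα i)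
      convex_setOf_feas
  have hsq : ConvexOn ℝ {α | Feas φ α} fun α => ‖wvec lam x α‖ ^ 2 :=
    (((convexOn_univ_norm.pow (fun _ _ => norm_nonneg _) 2).comp_linearMap
      (wvecₗ lam x)).subset (Set.subset_univ _) convex_setOf_feas).congr
      fun α _ => by simp [wvecₗ_apply]
  refine (((ConvexOn.sum convex_setOf_feas univ fun i _ => hconj i).smul
    (by positivity : (0 : ℝ) ≤ 1 / n)).add (hsq.smul (by positivity : 0 ≤ lam / 2))).congr ?_
  intro α _
  simp only [dualObj, sum_neg_distrib, Pi.add_apply, smul_eq_mul]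
  ring

theorem convexOn_dualityGap (hconv : ∀ i, ConvexOn ℝ Set.univ (φ i)) (hlam : 0 ≤ lam) :
    ConvexOn ℝ {α | Feas φ α} (dualityGap lam x φ) :=
  ((((convexOn_primalObj (x := x) hconv hlam).comp_linearMap (wvecₗ lam x)).subset
    (Set.subset_univ _) convex_setOf_feas).add (convexOn_neg_dualObj (x := x) hlam)).congr
    fun α _ => by simp [dualityGap, wvecₗ_apply, sub_eq_add_neg]

end Convexity

section CoordinateAscent

variable {n d : ℕ} {lam L : ℝ} {x : Fin n → EuclideanSpace ℝ (Fin d)} {φ : Fin n → ℝ → ℝ}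

/-- The witness is `c = α i + s * (-g - α i)`, with `g` the right derivative of `φ i` at the
current margin `⟪x i, w(α)⟫`. -/
theorem exists_update_dualObj_sub_ge (hlam : 0 < lam) {i : Fin n}
    (hconv : ConvexOn ℝ Set.univ (φ i)) (hL : ∀ a b, |φ i a - φ i b| ≤ L * |a - b|)
    (hx : ‖x i‖ ≤ 1) {α : Fin n → ℝ} (hα : Feas φ α) {s : ℝ} (hs0 : 0 ≤ s) (hs1 : s ≤ 1) :
    ∃ c, Feas φ (Function.update α i c) ∧
      s / n * (φ i ⟪x i, wvec lam x α⟫ + fconj (φ i) (-α i) + α i * ⟪x i, wvec lam x α⟫)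
          - (s / n) ^ 2 * (2 * L ^ 2 / lam)
        ≤ dualObj lam x φ (Function.update α i c) - dualObj lam x φ α := by
  set a := ⟪x i, wvec lam x α⟫
  set g := derivWithin (φ i) (Set.Ioi a) a
  have hg : IsSubgrad (φ i) a g := hconv.isSubgrad_rightDeriv a
  set δ := s * (-g - α i)
  have hc : -(α i + δ) = (1 - s) • -α i + s • g := by simp only [δ, smul_eq_mul]; ring
  have hfin : FiniteConj (φ i) (-(α i + δ)) :=
    hc ▸ convexOn_fconj.1 (hα i) hg.finiteConj (by linarith) hs0 (by ring)
  have hfconj : fconj (φ i) (-(α i + δ)) ≤ (1 - s) * fconj (φ i) (-α i) + s * (g * a - φ i a) := by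
    rw [hc, ← hg.fconj_eq]
    exact convexOn_fconj.2 (hα i) hg.finiteConj (by linarith) hs0 (by ring)
  have hquad : δ ^ 2 * ‖x i‖ ^ 2 ≤ s ^ 2 * (4 * L ^ 2) := by
    have hgL := abs_le.1 (abs_le_of_finiteConj hL hg.finiteConj)
    have hαL := abs_le.1 (abs_neg (α i) ▸ abs_le_of_finiteConj hL (hα i))
    have hdir : (-g - α i) ^ 2 ≤ (2 * L) ^ 2 := sq_le_sq' (by linarith) (by linarith)
    have hx2 : ‖x i‖ ^ 2 ≤ 1 := pow_le_one₀ (norm_nonneg _) hx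
    calc δ ^ 2 * ‖x i‖ ^ 2 = s ^ 2 * ((-g - α i) ^ 2 * ‖x i‖ ^ 2) := by ring
      _ ≤ s ^ 2 * ((2 * L) ^ 2 * 1) := by gcongr
      _ = s ^ 2 * (4 * L ^ 2) := by ring
  refine ⟨α i + δ, fun j => ?_, ?_⟩
  · rcases eq_or_ne j i with rfl | h
    · simpa using hfin
    · simpa [Function.update_of_ne h] using hα j
  · have hn : (0 : ℝ) < n := Nat.cast_pos.2 i.pos
    rw [dualObj_update_sub hlam.ne', add_sub_cancel_left]
    have hgain : s * (fconj (φ i) (-α i) - g * a + φ i a) / n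
        ≤ (fconj (φ i) (-α i) - fconj (φ i) (-(α i + δ))) / n := by
      gcongr; linarith
    have herr : δ ^ 2 * ‖x i‖ ^ 2 / (2 * lam * n ^ 2) ≤ (s / n) ^ 2 * (2 * L ^ 2 / lam) := by
      calc δ ^ 2 * ‖x i‖ ^ 2 / (2 * lam * n ^ 2) ≤ s ^ 2 * (4 * L ^ 2) / (2 * lam * n ^ 2) := by
            gcongr
        _ = (s / n) ^ 2 * (2 * L ^ 2 / lam) := by field_simp; ring
    have hsplit : s / n * (φ i a + fconj (φ i) (-α i) + α i * a)
        = s * (fconj (φ i) (-α i) - g * a + φ i a) / n - δ * a / n := by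
      simp only [δ]; field_simp; ring
    linarith

theorem le_expect_dualObj_step_sub (hn : 0 < n) (hlam : 0 < lam)
    (hconv : ∀ i, ConvexOn ℝ Set.univ (φ i)) (hL : ∀ i, ∀ a b, |φ i a - φ i b| ≤ L * |a - b|)
    (hx : ∀ i, ‖x i‖ ≤ 1) {step : (Fin n → ℝ) → Fin n → (Fin n → ℝ)}
    (hstep_max : ∀ α i c, Feas φ (Function.update α i c) →
      dualObj lam x φ (Function.update α i c) ≤ dualObj lam x φ (step α i))
    {α : Fin n → ℝ} (hα : Feas φ α) {s : ℝ} (hs0 : 0 ≤ s) (hs1 : s ≤ 1) :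
    s / n * dualityGap lam x φ α - (s / n) ^ 2 * (2 * L ^ 2 / lam)
      ≤ (𝔼 i, dualObj lam x φ (step α i)) - dualObj lam x φ α := by
  have : Nonempty (Fin n) := ⟨⟨0, hn⟩⟩
  have hstep : ∀ i, s / n * (φ i ⟪x i, wvec lam x α⟫ + fconj (φ i) (-α i)
      + α i * ⟪x i, wvec lam x α⟫) - (s / n) ^ 2 * (2 * L ^ 2 / lam)
      ≤ dualObj lam x φ (step α i) - dualObj lam x φ α := fun i => by
    obtain ⟨c, hc, hgain⟩ := exists_update_dualObj_sub_ge hlam (hconv i) (hL i) (hx i) hα hs0 hs1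
    exact hgain.trans (sub_le_sub_right (hstep_max α i c hc) _)
  calc s / n * dualityGap lam x φ α - (s / n) ^ 2 * (2 * L ^ 2 / lam)
      = 𝔼 i, (s / n * (φ i ⟪x i, wvec lam x α⟫ + fconj (φ i) (-α i)
          + α i * ⟪x i, wvec lam x α⟫) - (s / n) ^ 2 * (2 * L ^ 2 / lam)) := by
        rw [expect_sub_distrib, ← mul_expect, Fintype.expect_const, Fintype.expect_eq_sum_div_card,
          Fintype.card_fin, dualityGap_eq hlam.ne']
        ring
    _ ≤ 𝔼 i, (dualObj lam x φ (step α i) - dualObj lam x φ α) :=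
        expect_le_expect fun i _ => hstep i
    _ = (𝔼 i, dualObj lam x φ (step α i)) - dualObj lam x φ α := by
        rw [expect_sub_distrib, Fintype.expect_const]

end CoordinateAscent

section Expectation

variable {n : ℕ} (hn : 0 < n)

def extendIdx (t : ℕ) (f : Fin t → Fin n) : ℕ → Fin n :=
  fun k => if h : k < t then f ⟨k, h⟩ else ⟨0, hn⟩

theorem ExpIdx_eq_expect (t : ℕ) (g : (ℕ → Fin n) → ℝ) :
    ExpIdx hn t g = 𝔼 f : Fin t → Fin n, g (extendIdx hn t f) := by
  rw [Fintype.expect_eq_sum_div_card, Fintype.card_fun, Fintype.card_fin, Fintype.card_fin,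
    Nat.cast_pow]
  rfl

theorem ExpIdx_mono {t : ℕ} {g₁ g₂ : (ℕ → Fin n) → ℝ} (h : ∀ idx, g₁ idx ≤ g₂ idx) :
    ExpIdx hn t g₁ ≤ ExpIdx hn t g₂ := by
  simp only [ExpIdx_eq_expect]
  exact expect_le_expect fun f _ => h _

theorem ExpIdx_const (t : ℕ) (c : ℝ) : ExpIdx hn t (fun _ => c) = c := by
  have : Nonempty (Fin n) := ⟨⟨0, hn⟩⟩
  rw [ExpIdx_eq_expect, Fintype.expect_const]

theorem ExpIdx_const_sub (t : ℕ) (c : ℝ) (g : (ℕ → Fin n) → ℝ) :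
    ExpIdx hn t (fun idx => c - g idx) = c - ExpIdx hn t g := by
  have : Nonempty (Fin n) := ⟨⟨0, hn⟩⟩
  simp only [ExpIdx_eq_expect, expect_sub_distrib, Fintype.expect_const]

theorem extendIdx_snoc (t : ℕ) (f : Fin t → Fin n) (i : Fin n) :
    extendIdx hn (t + 1) (Fin.snoc f i) = Function.update (extendIdx hn t f) t i := by
  funext k
  rcases lt_trichotomy k t with hk | rfl | hk
  · simp [extendIdx, hk, hk.ne, Nat.lt_succ_of_lt hk, Fin.snoc]
  · simp [extendIdx, Fin.snoc]
  · simp [extendIdx, hk.ne', not_lt.2 hk.le, not_le.2 hk]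

theorem ExpIdx_succ (t : ℕ) (g : (ℕ → Fin n) → ℝ) :
    ExpIdx hn (t + 1) g = ExpIdx hn t fun idx => 𝔼 i, g (Function.update idx t i) := by
  simp only [ExpIdx_eq_expect]
  rw [← Fintype.expect_equiv (Fin.snocEquiv fun _ => Fin n)
    (fun q => g (extendIdx hn (t + 1) (Fin.snoc q.2 q.1))) _ fun _ => rfl,
    ← univ_product_univ, expect_product' (f := fun i p => g (extendIdx hn (t + 1) (Fin.snoc p i))),
    expect_comm]
  simp only [extendIdx_snoc]

theorem ExpIdx_eq_of_le {t T : ℕ} (htT : t ≤ T) {g : (ℕ → Fin n) → ℝ}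
    (hg : ∀ idx idx', (∀ k < t, idx k = idx' k) → g idx = g idx') :
    ExpIdx hn T g = ExpIdx hn t g := by
  induction T, htT using Nat.le_induction with
  | base => rfl
  | succ T htT ih =>
    have : Nonempty (Fin n) := ⟨⟨0, hn⟩⟩
    rw [ExpIdx_succ, ← ih]
    congr 1
    funext idx
    rw [← Fintype.expect_const (ι := Fin n) (g idx)]
    exact expect_congr rfl fun i _ =>
      hg _ _ fun k hk => Function.update_of_ne (by omega) _ _

end Expectation

section Trajectory

variable {n d : ℕ} {lam L : ℝ} {x : Fin n → EuclideanSpace ℝ (Fin d)}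
  {φ : Fin n → ℝ → ℝ} {step : (Fin n → ℝ) → Fin n → (Fin n → ℝ)} {α0 : Fin n → ℝ}

theorem traj_congr {idx idx' : ℕ → Fin n} {t : ℕ} (h : ∀ k < t, idx k = idx' k) :
    traj step α0 idx t = traj step α0 idx' t := by
  induction t with
  | zero => rfl
  | succ t ih =>
    simp only [traj]
    rw [ih fun k hk => h k (by omega), h t (by omega)]

theorem feas_traj (hstep_feas : ∀ α i, Feas φ α → Feas φ (step α i)) (h0 : Feas φ α0)
    (idx : ℕ → Fin n) (t : ℕ) : Feas φ (traj step α0 idx t) := by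
  induction t with
  | zero => exact h0
  | succ t ih => exact hstep_feas _ _ ih

theorem ExpIdx_traj_eq_of_le (hn : 0 < n) {t T : ℕ} (htT : t ≤ T) (F : (Fin n → ℝ) → ℝ) :
    ExpIdx hn T (fun idx => F (traj step α0 idx t))
      = ExpIdx hn t (fun idx => F (traj step α0 idx t)) :=
  ExpIdx_eq_of_le hn htT fun _ _ h => congrArg F (traj_congr h)

theorem ExpIdx_traj_succ (hn : 0 < n) (t : ℕ) (F : (Fin n → ℝ) → ℝ) :
    ExpIdx hn (t + 1) (fun idx => F (traj step α0 idx (t + 1)))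
      = ExpIdx hn t (fun idx => 𝔼 i, F (step (traj step α0 idx t) i)) := by
  rw [ExpIdx_succ]
  congr 1
  funext idx
  refine expect_congr rfl fun i _ => ?_
  simp only [traj, Function.update_self]
  rw [traj_congr fun k hk => Function.update_of_ne hk.ne _ _]

theorem ExpIdx_traj_progress (hn : 0 < n) (hlam : 0 < lam)
    (hconv : ∀ i, ConvexOn ℝ Set.univ (φ i)) (hL : ∀ i, ∀ a b, |φ i a - φ i b| ≤ L * |a - b|)
    (hx : ∀ i, ‖x i‖ ≤ 1)
    (hstep_max : ∀ α i c, Feas φ (Function.update α i c) →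
      dualObj lam x φ (Function.update α i c) ≤ dualObj lam x φ (step α i))
    (hfeas : ∀ idx t, Feas φ (traj step α0 idx t)) (t : ℕ) {s : ℝ} (hs0 : 0 ≤ s) (hs1 : s ≤ 1) :
    s / n * ExpIdx hn t (fun idx => dualityGap lam x φ (traj step α0 idx t))
        - (s / n) ^ 2 * (2 * L ^ 2 / lam)
      ≤ ExpIdx hn (t + 1) (fun idx => dualObj lam x φ (traj step α0 idx (t + 1)))
        - ExpIdx hn t (fun idx => dualObj lam x φ (traj step α0 idx t)) := by
  have : Nonempty (Fin n) := ⟨⟨0, hn⟩⟩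
  have h := ExpIdx_mono hn (t := t) fun idx =>
    le_expect_dualObj_step_sub hn hlam hconv hL hx hstep_max (hfeas idx t) hs0 hs1
  rw [ExpIdx_traj_succ]
  simp only [ExpIdx_eq_expect, expect_sub_distrib, Fintype.expect_const, ← mul_expect] at h ⊢
  exact h

theorem ExpIdx_dualityGap_average_le (hn : 0 < n) (hlam : 0 ≤ lam)
    (hconv : ∀ i, ConvexOn ℝ Set.univ (φ i)) (hfeas : ∀ idx t, Feas φ (traj step α0 idx t))
    {T₀ T : ℕ} (hT : T₀ < T) :
    ExpIdx hn T (fun idx => dualityGap lam x φ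
        ((1 / ((T : ℝ) - T₀)) • ∑ t ∈ Ico T₀ T, traj step α0 idx t))
      ≤ 1 / ((T : ℝ) - T₀)
        * ∑ t ∈ Ico T₀ T, ExpIdx hn t (fun idx => dualityGap lam x φ (traj step α0 idx t)) := by
  have hcard : ((T : ℝ) - T₀) = #(Ico T₀ T) := by simp [Nat.cast_sub hT.le]
  have hτ : (0 : ℝ) < (T : ℝ) - T₀ := sub_pos.2 (Nat.cast_lt.2 hT)
  have hjensen : ∀ idx, dualityGap lam x φ
      ((1 / ((T : ℝ) - T₀)) • ∑ t ∈ Ico T₀ T, traj step α0 idx t)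
      ≤ ∑ t ∈ Ico T₀ T, 1 / ((T : ℝ) - T₀) * dualityGap lam x φ (traj step α0 idx t) := by
    intro idx
    rw [smul_sum]
    refine (convexOn_dualityGap hconv hlam).map_sum_le (fun _ _ => (one_div_pos.2 hτ).le) ?_
      fun t _ => hfeas idx t
    rw [sum_const, nsmul_eq_mul, ← hcard]
    field_simp
  refine (ExpIdx_mono hn hjensen).trans_eq ?_
  rw [mul_sum]
  simp only [ExpIdx_eq_expect, expect_sum_comm, ← mul_expect]
  refine sum_congr rfl fun t ht => ?_
  have h := ExpIdx_traj_eq_of_le (step := step) (α0 := α0) hn (mem_Ico.1 ht).2.le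
    (dualityGap lam x φ)
  rw [ExpIdx_eq_expect, ExpIdx_eq_expect] at h
  rw [h]

end Trajectory

section Rate

variable {n : ℕ} {C ε Dstar : ℝ} {d G : ℕ → ℝ}

theorem le_add_pow_mul_of_rec {e : ℕ → ℝ} (hC : 0 ≤ C)
    (hrec : ∀ t, e (t + 1) ≤ (1 - 1 / n) * e t + (1 / n) ^ 2 * C) (t : ℕ) :
    e t ≤ C / n + (1 - 1 / n) ^ t * e 0 := by
  induction t with
  | zero => simp only [pow_zero, one_mul]; linarith [div_nonneg hC (Nat.cast_nonneg n)]
  | succ t ih =>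
    calc e (t + 1) ≤ (1 - 1 / n) * (C / n + (1 - 1 / n) ^ t * e 0) + (1 / n) ^ 2 * C := by
          linarith [hrec t, mul_le_mul_of_nonneg_left ih (Nat.one_sub_one_div_cast_nonneg n)]
      _ = C / n + (1 - 1 / n) ^ (t + 1) * e 0 := by ring

theorem one_le_log_exp_one_mul (hn : 0 < n) : 1 ≤ log (exp 1 * n) := by
  rw [log_mul (exp_ne_zero 1) (Nat.cast_ne_zero.2 hn.ne'), log_exp]
  linarith [log_nonneg (Nat.one_le_cast.2 hn : (1 : ℝ) ≤ n)]

theorem one_sub_inv_pow_mul_log_le (hn : 0 < n) {t : ℕ}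
    (ht : n * log (log (exp 1 * n)) ≤ t) : (1 - 1 / n) ^ t * log (exp 1 * n) ≤ 1 := by
  have hnpos : (0 : ℝ) < n := Nat.cast_pos.2 hn
  have hlog := one_le_log_exp_one_mul hn
  have hpow : (1 - 1 / (n : ℝ)) ^ t ≤ exp (-(t / n)) := by
    calc (1 - 1 / (n : ℝ)) ^ t ≤ exp (-(1 / n)) ^ t := by
          gcongr
          · exact Nat.one_sub_one_div_cast_nonneg n
          · linarith [add_one_le_exp (-(1 / (n : ℝ)))]
      _ = exp (-(t / n)) := by rw [← exp_nat_mul]; ring_nf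
  have hexp : log (exp 1 * n) ≤ exp (t / n) := by
    calc log (exp 1 * n) = exp (log (log (exp 1 * n))) := (exp_log (by linarith)).symm
      _ ≤ exp (t / n) := exp_le_exp.2 ((le_div_iff₀ hnpos).2 (by linarith))
  calc (1 - 1 / (n : ℝ)) ^ t * log (exp 1 * n) ≤ exp (-(t / n)) * exp (t / n) := by
        gcongr
    _ = 1 := by rw [← exp_add, neg_add_cancel, exp_zero]

/-- Taking `s = 2n / (2n + k)` in the recursion gives the `O(1 / k)` rate of the second phase. -/
theorem le_div_of_rec {e : ℕ → ℝ} (hn : 0 < n) (hC : 0 ≤ C)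
    (hrec : ∀ t s, 0 ≤ s → s ≤ 1 → e (t + 1) ≤ (1 - s / n) * e t + (s / n) ^ 2 * C)
    {t₀ : ℕ} (h0 : e t₀ ≤ 2 * C / n) (k : ℕ) : e (t₀ + k) ≤ 4 * C / (2 * n + k) := by
  have hnpos : (0 : ℝ) < n := Nat.cast_pos.2 hn
  induction k with
  | zero => simpa [mul_div_mul_left, show (4 : ℝ) = 2 * 2 by norm_num, mul_assoc] using h0
  | succ k ih =>
    set m : ℝ := 2 * n + k
    have hm : 2 * (n : ℝ) ≤ m := le_add_of_nonneg_right (Nat.cast_nonneg k)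
    have hmpos : 0 < m := by linarith
    have h := hrec (t₀ + k) (2 * n / m) (by positivity) ((div_le_one hmpos).2 hm)
    rw [show 2 * (n : ℝ) / m / n = 2 / m by field_simp] at h
    have hcoef : 0 ≤ 1 - 2 / m :=
      sub_nonneg.2 ((div_le_one hmpos).2 (by linarith [(Nat.one_le_cast.2 hn : (1 : ℝ) ≤ n)]))
    calc e (t₀ + k + 1) ≤ (1 - 2 / m) * (4 * C / m) + (2 / m) ^ 2 * C := by
          linarith [mul_le_mul_of_nonneg_left ih hcoef]
      _ = 4 * C * (m - 1) / m ^ 2 := by field_simp; ring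
      _ ≤ 4 * C / (m + 1) := by
          rw [div_le_div_iff₀ (by positivity) (by linarith)]
          nlinarith
      _ = 4 * C / (2 * n + ↑(k + 1)) := by push_cast; ring

theorem sub_le_of_progress (hn : 0 < n) (hC : 0 ≤ C) (hε : 0 < ε)
    (hprog : ∀ t s, 0 ≤ s → s ≤ 1 → s / n * G t - (s / n) ^ 2 * C ≤ d (t + 1) - d t)
    (hG : ∀ t, Dstar - d t ≤ G t) (h0 : Dstar - d 0 ≤ C * log (exp 1 * n) / n) {T₀ : ℕ}
    (hT₀ : ((⌈n * log (log (exp 1 * n))⌉ : ℤ) : ℝ) + 8 * C / ε ≤ T₀) {t : ℕ} (ht : T₀ ≤ t) :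
    Dstar - d t ≤ ε / 2 := by
  have hrec : ∀ t s, 0 ≤ s → s ≤ 1 →
      Dstar - d (t + 1) ≤ (1 - s / n) * (Dstar - d t) + (s / n) ^ 2 * C := fun t s hs0 hs1 => by
    linear_combination hprog t s hs0 hs1 + mul_le_mul_of_nonneg_left (hG t)
      (by positivity : 0 ≤ s / n)
  set t₀ := ⌈n * log (log (exp 1 * n))⌉₊
  have hloglog : 0 ≤ n * log (log (exp 1 * n)) :=
    mul_nonneg (Nat.cast_nonneg n) (log_nonneg (one_le_log_exp_one_mul hn))
  rw [← natCast_ceil_eq_intCast_ceil hloglog] at hT₀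
  have hstart : Dstar - d t₀ ≤ 2 * C / n := by
    calc Dstar - d t₀ ≤ C / n + (1 - 1 / n) ^ t₀ * (Dstar - d 0) :=
          le_add_pow_mul_of_rec (e := fun t => Dstar - d t) hC
            (fun t => hrec t 1 zero_le_one le_rfl) t₀
      _ ≤ C / n + (1 - 1 / n) ^ t₀ * log (exp 1 * n) * (C / n) := by
          have := pow_nonneg (Nat.one_sub_one_div_cast_nonneg (α := ℝ) n) t₀
          rw [mul_assoc, mul_div_assoc', mul_comm (log _) C]
          gcongr
      _ ≤ C / n + 1 * (C / n) := by
          gcongr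
          exact one_sub_inv_pow_mul_log_le hn (Nat.le_ceil _)
      _ = 2 * C / n := by ring
  have hT₀t : (t₀ : ℝ) + 8 * C / ε ≤ t := hT₀.trans (Nat.cast_le.2 ht)
  obtain ⟨k, rfl⟩ := Nat.exists_eq_add_of_le (Nat.cast_le.1 (le_of_add_le_of_nonneg_left hT₀t
    (by positivity : 0 ≤ 8 * C / ε)) : t₀ ≤ t)
  have hk : 8 * C ≤ ε * k := by
    push_cast at hT₀t
    exact (div_le_iff₀' hε).1 (by linarith)
  calc Dstar - d (t₀ + k) ≤ 4 * C / (2 * n + k) :=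
        le_div_of_rec (e := fun t => Dstar - d t) hn hC hrec hstart k
    _ ≤ ε / 2 := by
        rw [div_le_div_iff₀ (by positivity) two_pos]
        nlinarith [mul_nonneg hε.le (Nat.cast_nonneg (α := ℝ) n)]

/-- With `s = n / (T - T₀)` the progress inequality telescopes over `[T₀, T)`. -/
theorem average_le_of_progress (hn : 0 < n) (hC : 0 ≤ C) (hε : 0 < ε)
    (hprog : ∀ t s, 0 ≤ s → s ≤ 1 → s / n * G t - (s / n) ^ 2 * C ≤ d (t + 1) - d t)
    (hd : ∀ t, d t ≤ Dstar) (hG : ∀ t, Dstar - d t ≤ G t)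
    (h0 : Dstar - d 0 ≤ C * log (exp 1 * n) / n) {T₀ T : ℕ}
    (hT₀ : ((⌈n * log (log (exp 1 * n))⌉ : ℤ) : ℝ) + 8 * C / ε ≤ T₀)
    (hT : n + 2 * C / ε ≤ (T : ℝ) - T₀) :
    1 / ((T : ℝ) - T₀) * ∑ t ∈ Ico T₀ T, G t ≤ ε := by
  set τ := (T : ℝ) - T₀
  have hCε : 0 ≤ 2 * C / ε := by positivity
  have hnτ : (n : ℝ) ≤ τ := by linarith
  have hτ : 0 < τ := lt_of_lt_of_le (Nat.cast_pos.2 hn) hnτ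
  have hT₀T : T₀ ≤ T := Nat.cast_le.1 (sub_pos.1 hτ).le
  have hcard : (#(Ico T₀ T) : ℝ) = τ := by simp [τ, Nat.cast_sub hT₀T]
  have hstep : ∀ t, G t / τ - C / τ ^ 2 ≤ d (t + 1) - d t := fun t => by
    have h := hprog t (n / τ) (by positivity) ((div_le_one hτ).2 hnτ)
    rwa [show (n : ℝ) / τ / n = 1 / τ by field_simp, div_pow, one_pow, one_div_mul_eq_div,
      one_div_mul_eq_div] at h
  have hsum := sum_le_sum fun t (_ : t ∈ Ico T₀ T) => hstep t
  rw [sum_sub_distrib, sum_const, nsmul_eq_mul, hcard, sum_Ico_sub d hT₀T, ← sum_div] at hsum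
  have hdual := sub_le_of_progress hn hC hε hprog hG h0 hT₀ le_rfl
  have hCτ : C / τ ≤ ε / 2 := by
    rw [div_le_iff₀ hτ]
    nlinarith [(div_le_iff₀' hε).1 (by linarith : 2 * C / ε ≤ τ)]
  calc 1 / τ * ∑ t ∈ Ico T₀ T, G t = (∑ t ∈ Ico T₀ T, G t) / τ - τ * (C / τ ^ 2) + C / τ := by
        field_simp; ring
    _ ≤ d T - d T₀ + C / τ := by linarith
    _ ≤ ε := by linarith [hd T]

end Rate

theorem sdca_with_sgd_init_general
    (n d : ℕ) (hn : 0 < n)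
    (x : Fin n → EuclideanSpace ℝ (Fin d))
    (φ : Fin n → ℝ → ℝ) (hconv : ∀ i, ConvexOn ℝ Set.univ (φ i))
    (lam : ℝ) (hlam : 0 < lam)
    (L : ℝ) (hL : ∀ i, ∀ a b : ℝ, |φ i a - φ i b| ≤ L * |a - b|)
    (hx : ∀ i, ‖x i‖ ≤ 1)
    (step : (Fin n → ℝ) → Fin n → (Fin n → ℝ))
    (hstep_feas : ∀ α i, Feas φ α → Feas φ (step α i))
    (hstep_max : ∀ α i c, Feas φ (Function.update α i c) →
      dualObj lam x φ (Function.update α i c) ≤ dualObj lam x φ (step α i))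
    (αstar : Fin n → ℝ) (hstar_feas : Feas φ αstar)
    (hstar_max : ∀ β, Feas φ β → dualObj lam x φ β ≤ dualObj lam x φ αstar)
    (α0 : Fin n → ℝ) (hα0_feas : Feas φ α0)
    (hα0 : dualObj lam x φ αstar - dualObj lam x φ α0
        ≤ 2 * L ^ 2 * Real.log (Real.exp 1 * n) / (lam * n))
    (εP : ℝ) (hεP : 0 < εP)
    (T₀ T : ℕ)
    (hT₀ : ((⌈(n : ℝ) * Real.log (Real.log (Real.exp 1 * n))⌉ : ℤ) : ℝ)
        + 16 * L ^ 2 / (lam * εP) ≤ T₀)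
    (hT : (n : ℝ) + 4 * L ^ 2 / (lam * εP) ≤ (T : ℝ) - T₀) :
    (ExpIdx hn T (fun idx =>
        primalObj lam x φ (wvec lam x
          ((1 / ((T : ℝ) - T₀)) • ∑ t ∈ Finset.Ico T₀ T, traj step α0 idx t))
        - dualObj lam x φ
          ((1 / ((T : ℝ) - T₀)) • ∑ t ∈ Finset.Ico T₀ T, traj step α0 idx t)) ≤ εP)
    ∧ ∀ t : ℕ, T₀ ≤ t →
        ExpIdx hn t (fun idx =>
          dualObj lam x φ αstar - dualObj lam x φ (traj step α0 idx t)) ≤ εP / 2 := by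
  set C := 2 * L ^ 2 / lam
  have hC : 0 ≤ C := by positivity
  have hfeas := feas_traj hstep_feas hα0_feas
  set Dstar := dualObj lam x φ αstar
  set d := fun t => ExpIdx hn t fun idx => dualObj lam x φ (traj step α0 idx t)
  set G := fun t => ExpIdx hn t fun idx => dualityGap lam x φ (traj step α0 idx t)
  have hprog : ∀ t s, 0 ≤ s → s ≤ 1 → s / n * G t - (s / n) ^ 2 * C ≤ d (t + 1) - d t :=
    fun t _ hs0 hs1 => ExpIdx_traj_progress hn hlam hconv hL hx hstep_max hfeas t hs0 hs1
  have hd : ∀ t, d t ≤ Dstar := fun t =>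
    (ExpIdx_mono hn fun idx => hstar_max _ (hfeas idx t)).trans_eq (ExpIdx_const hn t _)
  have hG : ∀ t, Dstar - d t ≤ G t := fun t => by
    rw [← ExpIdx_const_sub]
    exact ExpIdx_mono hn fun idx => sub_le_sub_right (dualObj_le_primalObj hlam hstar_feas _) _
  have h0 : Dstar - d 0 ≤ C * log (exp 1 * n) / n := by
    simp only [d, traj, ExpIdx_const]
    exact hα0.trans_eq (by ring)
  have hT₀' : ((⌈(n : ℝ) * log (log (exp 1 * n))⌉ : ℤ) : ℝ) + 8 * C / εP ≤ T₀ := by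
    convert hT₀ using 2; simp only [C]; field_simp; ring
  have hT' : (n : ℝ) + 2 * C / εP ≤ (T : ℝ) - T₀ := by
    convert hT using 2; simp only [C]; field_simp; ring
  refine ⟨?_, fun t ht => ?_⟩
  · have hT₀T : T₀ < T := Nat.cast_lt.1 (sub_pos.1
      ((add_pos_of_pos_of_nonneg (Nat.cast_pos.2 hn) (by positivity)).trans_le hT'))
    exact (ExpIdx_dualityGap_average_le hn hlam.le hconv hfeas hT₀T).trans
      (average_le_of_progress hn hC hεP hprog hd hG h0 hT₀' hT')
  · rw [ExpIdx_const_sub]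
    exact sub_le_of_progress hn hC hεP hprog hG h0 hT₀' ht

/-- Theorem 4 (conditional form): SDCA for `L`-Lipschitz losses started from an
initialization whose dual suboptimality is at most `2L² log(en)/(λn)` (as
guaranteed by one epoch of Modified-SGD). With
`T₀ ≥ ⌈n log(log(en))⌉ + 16L²/(λ ε_P)` and `T - T₀ ≥ n + 4L²/(λ ε_P)`, the
expected duality gap of the averaged iterate is at most `ε_P`, and the expected
dual suboptimality at any time `t ≥ T₀` is at most `ε_P / 2`. -/
theorem sdca_with_sgd_init
    (n d : ℕ) (hn : 0 < n)
    (x : Fin n → EuclideanSpace ℝ (Fin d))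
    (φ : Fin n → ℝ → ℝ) (hconv : ∀ i, ConvexOn ℝ Set.univ (φ i))
    (lam : ℝ) (hlam : 0 < lam)
    (L : ℝ) (hL : ∀ i, ∀ a b : ℝ, |φ i a - φ i b| ≤ L * |a - b|)
    (hx : ∀ i, ‖x i‖ ≤ 1) (hφ0 : ∀ i a, 0 ≤ φ i a) (hφ1 : ∀ i, φ i 0 ≤ 1)
    (step : (Fin n → ℝ) → Fin n → (Fin n → ℝ))
    (hstep_off : ∀ α i j, j ≠ i → step α i j = α j)
    (hstep_feas : ∀ α i, Feas φ α → Feas φ (step α i))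
    (hstep_max : ∀ α i c, Feas φ (Function.update α i c) →
      dualObj lam x φ (Function.update α i c) ≤ dualObj lam x φ (step α i))
    (αstar : Fin n → ℝ) (hstar_feas : Feas φ αstar)
    (hstar_max : ∀ β, Feas φ β → dualObj lam x φ β ≤ dualObj lam x φ αstar)
    (α0 : Fin n → ℝ) (hα0_feas : Feas φ α0)
    (hα0 : dualObj lam x φ αstar - dualObj lam x φ α0
        ≤ 2 * L ^ 2 * Real.log (Real.exp 1 * n) / (lam * n))
    (εP : ℝ) (hεP : 0 < εP)
    (T₀ T : ℕ)
    (hT₀ : ((⌈(n : ℝ) * Real.log (Real.log (Real.exp 1 * n))⌉ : ℤ) : ℝ)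
        + 16 * L ^ 2 / (lam * εP) ≤ T₀)
    (hT : (n : ℝ) + 4 * L ^ 2 / (lam * εP) ≤ (T : ℝ) - T₀) :
    (ExpIdx hn T (fun idx =>
        primalObj lam x φ (wvec lam x
          ((1 / ((T : ℝ) - T₀)) • ∑ t ∈ Finset.Ico T₀ T, traj step α0 idx t))
        - dualObj lam x φ
          ((1 / ((T : ℝ) - T₀)) • ∑ t ∈ Finset.Ico T₀ T, traj step α0 idx t)) ≤ εP)
    ∧ ∀ t : ℕ, T₀ ≤ t →
        ExpIdx hn t (fun idx =>
          dualObj lam x φ αstar - dualObj lam x φ (traj step α0 idx t)) ≤ εP / 2 :=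
  sdca_with_sgd_init_general n d hn x φ hconv lam hlam L hL hx step hstep_feas hstep_max αstar
    hstar_feas hstar_max α0 hα0_feas hα0 εP hεP T₀ T hT₀ hT
end

section
/- Refined dual strong convexity (Proposition 5, first part): Assume for each i there is a function γ_i(·) ≥ 0 such that for all a, b ∈ ℝ and every u ∈ ∂φ_i*(−b), φ_i*(−a) − φ_i*(−b) + u(a−b) ≥ γ_i(u)·(a−b)². Set γ_i = γ_i(w*ᵀx_i). Then for every α ∈ ℝⁿ with φ_i*(−α_i) < ∞ for all i, with w = w(α): D(α*) − D(α) ≥ (1/n)∑_{i=1}^n γ_i (α_i − α*_i)² + (λ/2)‖w − w*‖². -/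
open scoped BigOperators RealInnerProductSpace
open Finset

/-! Since `w(·)` is linear, `‖w(α)‖² - ‖w*‖² = ‖w(α) - w*‖² + 2⟪w(α) - w*, w*⟫` and
`λ n ⟪w(α) - w*, w*⟫ = ∑ᵢ uᵢ (αᵢ - α*ᵢ)` with `uᵢ = ⟪xᵢ, w*⟫`. Hence the dual gap `D(α*) - D(α)` is
exactly `(1/n) ∑ᵢ (φᵢ*(-αᵢ) - φᵢ*(-α*ᵢ) + uᵢ (αᵢ - α*ᵢ)) + (λ/2)‖w(α) - w*‖²`, and as
`uᵢ ∈ ∂φᵢ*(-α*ᵢ)`, the hypothesis bounds each summand below by `γᵢ (αᵢ - α*ᵢ)²`. -/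

section DualGap

variable {n d : ℕ} {lam : ℝ} (x : Fin n → EuclideanSpace ℝ (Fin d))

theorem wvec_sub (α β : Fin n → ℝ) : wvec lam x α - wvec lam x β = wvec lam x (α - β) := by
  simp only [wvec, ← smul_sub, ← sum_sub_distrib, Pi.sub_apply, sub_smul]

theorem sum_inner_mul_eq_inner_wvec (hlamn : lam * n ≠ 0) (v : EuclideanSpace ℝ (Fin d))
    (c : Fin n → ℝ) : ∑ i, ⟪x i, v⟫ * c i = lam * n * ⟪wvec lam x c, v⟫ := by
  simp only [wvec, real_inner_smul_left, sum_inner]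
  rw [← mul_assoc, mul_one_div_cancel hlamn, one_mul]
  exact sum_congr rfl fun i _ => mul_comm _ _

theorem dualObj_sub_dualObj (hlamn : lam * n ≠ 0) (φ : Fin n → ℝ → ℝ) (α β : Fin n → ℝ) :
    dualObj lam x φ β - dualObj lam x φ α
      = (1 / (n : ℝ)) * ∑ i, (fconj (φ i) (-(α i)) - fconj (φ i) (-(β i))
          + ⟪x i, wvec lam x β⟫ * (α i - β i))
        + lam / 2 * ‖wvec lam x α - wvec lam x β‖ ^ 2 := by
  have hn : (n : ℝ) ≠ 0 := right_ne_zero_of_mul hlamn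
  have hlinear : ∑ i, ⟪x i, wvec lam x β⟫ * (α i - β i)
      = lam * n * (⟪wvec lam x α, wvec lam x β⟫ - ‖wvec lam x β‖ ^ 2) := by
    rw [← real_inner_self_eq_norm_sq, ← inner_sub_left, wvec_sub]
    exact sum_inner_mul_eq_inner_wvec x hlamn _ (α - β)
  rw [sum_add_distrib, hlinear, norm_sub_sq_real]
  simp only [dualObj, sum_sub_distrib, sum_neg_distrib]
  field_simp
  ring

end DualGap

theorem refined_dual_strong_convexity_general
    (n d : ℕ) (hn : 1 ≤ n)
    (x : Fin n → EuclideanSpace ℝ (Fin d))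
    (φ : Fin n → ℝ → ℝ)
    (lam : ℝ) (hlam : 0 < lam)
    (γfun : Fin n → ℝ → ℝ)
    (hrsc : ∀ i, ∀ a b u : ℝ, FiniteConj (φ i) (-a) → ConjSubgrad (φ i) (-b) u →
      γfun i u * (a - b) ^ 2 ≤ fconj (φ i) (-a) - fconj (φ i) (-b) + u * (a - b))
    (wstar : EuclideanSpace ℝ (Fin d))
    (αstar : Fin n → ℝ)
    (hws : wvec lam x αstar = wstar)
    (hsub_conj : ∀ i, ConjSubgrad (φ i) (-(αstar i)) ⟪x i, wstar⟫)
    (α : Fin n → ℝ) (hα : Feas φ α) :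
    (1 / (n : ℝ)) * ∑ i, γfun i ⟪x i, wstar⟫ * (α i - αstar i) ^ 2
        + lam / 2 * ‖wvec lam x α - wstar‖ ^ 2
      ≤ dualObj lam x φ αstar - dualObj lam x φ α := by
  subst hws
  have hlamn : lam * n ≠ 0 := (mul_pos hlam (by exact_mod_cast hn)).ne'
  rw [dualObj_sub_dualObj x hlamn]
  gcongr with i
  exact hrsc i _ _ _ (hα i) (hsub_conj i)

/-- Proposition 5 (first part): refined dual strong convexity. Under the
refined conjugate strong-convexity condition with moduli `γᵢ(·) ≥ 0`, setting
`γᵢ = γᵢ(w*ᵀxᵢ)`, for every dual-feasible `α` with `w = w(α)`: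
`D(α*) - D(α) ≥ (1/n) ∑ᵢ γᵢ (αᵢ - α*ᵢ)² + (λ/2)‖w - w*‖²`. -/
theorem refined_dual_strong_convexity
    (n d : ℕ) (hn : 1 ≤ n)
    (x : Fin n → EuclideanSpace ℝ (Fin d))
    (φ : Fin n → ℝ → ℝ) (hconv : ∀ i, ConvexOn ℝ Set.univ (φ i))
    (lam : ℝ) (hlam : 0 < lam)
    (γfun : Fin n → ℝ → ℝ) (hγ : ∀ i u, 0 ≤ γfun i u)
    (hrsc : ∀ i, ∀ a b u : ℝ, FiniteConj (φ i) (-a) → ConjSubgrad (φ i) (-b) u →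
      γfun i u * (a - b) ^ 2 ≤ fconj (φ i) (-a) - fconj (φ i) (-b) + u * (a - b))
    (wstar : EuclideanSpace ℝ (Fin d))
    (hwmin : ∀ w, primalObj lam x φ wstar ≤ primalObj lam x φ w)
    (αstar : Fin n → ℝ) (hstar_feas : Feas φ αstar)
    (hstar_max : ∀ β, Feas φ β → dualObj lam x φ β ≤ dualObj lam x φ αstar)
    (hws : wvec lam x αstar = wstar)
    (hsub_conj : ∀ i, ConjSubgrad (φ i) (-(αstar i)) ⟪x i, wstar⟫)
    (hsub : ∀ i, IsSubgrad (φ i) ⟪x i, wstar⟫ (-(αstar i)))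
    (α : Fin n → ℝ) (hα : Feas φ α) :
    (1 / (n : ℝ)) * ∑ i, γfun i ⟪x i, wstar⟫ * (α i - αstar i) ^ 2
        + lam / 2 * ‖wvec lam x α - wstar‖ ^ 2
      ≤ dualObj lam x φ αstar - dualObj lam x φ α :=
  refined_dual_strong_convexity_general n d hn x φ lam hlam γfun hrsc wstar αstar hws hsub_conj α hα
end

section
/- Refined strong convexity parameter for the hinge loss: Let y ∈ {−1, +1} and φ(u) = max(0, 1 − yu), whose convex conjugate satisfies φ*(−a) = −ay when ay ∈ [0,1] and φ*(−a) = +∞ otherwise. Then for all a, b ∈ ℝ with ay ∈ [0,1] and by ∈ [0,1], and every u ∈ ℝ with −b ∈ ∂φ(u): φ*(−a) − φ*(−b) + u(a − b) = |uy − 1|·|a − b| ≥ |uy − 1|·(a − b)². -/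
open scoped BigOperators RealInnerProductSpace
open Finset

theorem IsSubgrad.eq_of_hasDerivAt {φ : ℝ → ℝ} {u g m : ℝ} (hg : IsSubgrad φ u g)
    (hφ : HasDerivAt φ m u) : g = m := by
  have hmin : IsLocalMin (fun v => φ v - g * v) u :=
    IsMinOn.isLocalMin (s := Set.univ)
      (fun v _ => show φ u - g * u ≤ φ v - g * v by linarith [hg v]) Filter.univ_mem
  linarith [hmin.hasDerivAt_eq_zero (hφ.sub ((hasDerivAt_id u).const_mul g))]

theorem hasDerivAt_hinge_of_one_lt {y u : ℝ} (h : 1 < y * u) :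
    HasDerivAt (fun v => max 0 (1 - y * v)) 0 u := by
  refine (hasDerivAt_const u (0 : ℝ)).congr_of_eventuallyEq ?_
  have hnear : ∀ᶠ v in nhds u, 1 < y * v :=
    (continuous_const.mul continuous_id).continuousAt.eventually (lt_mem_nhds h)
  filter_upwards [hnear] with v hv
  exact max_eq_left (by linarith)

theorem hasDerivAt_hinge_of_lt_one {y u : ℝ} (h : y * u < 1) :
    HasDerivAt (fun v => max 0 (1 - y * v)) (-y) u := by
  have hlin : HasDerivAt (fun v => 1 - y * v) (-y) u := by
    simpa using ((hasDerivAt_id u).const_mul y).const_sub 1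
  refine hlin.congr_of_eventuallyEq ?_
  have hnear : ∀ᶠ v in nhds u, y * v < 1 :=
    (continuous_const.mul continuous_id).continuousAt.eventually (gt_mem_nhds h)
  filter_upwards [hnear] with v hv
  exact max_eq_right (by linarith)

/-- Complementary slackness: `-b ∈ ∂φ(u)` forces `b y = 0` where the margin `u y` exceeds
`1` and `b y = 1` where it is below `1`. -/
theorem hinge_margin_mul_dual_gap_nonneg {y a b u : ℝ} (hy : y * y = 1)
    (ha : a * y ∈ Set.Icc (0 : ℝ) 1)
    (hu : IsSubgrad (fun v => max 0 (1 - y * v)) u (-b)) :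
    0 ≤ (u * y - 1) * (y * (a - b)) := by
  rcases lt_trichotomy (u * y) 1 with h | h | h
  · have hb : -b = -y := hu.eq_of_hasDerivAt (hasDerivAt_hinge_of_lt_one (by linarith))
    have hgap : y * (a - b) = a * y - 1 := by linear_combination hb * y - hy
    rw [hgap]
    exact mul_nonneg_of_nonpos_of_nonpos (by linarith) (by linarith [ha.2])
  · simp [h]
  · have hb : -b = 0 := hu.eq_of_hasDerivAt (hasDerivAt_hinge_of_one_lt (by linarith))
    have hgap : y * (a - b) = a * y := by linear_combination hb * y
    rw [hgap]
    exact mul_nonneg (by linarith) ha.1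

/-- Refined strong convexity parameter for the hinge loss
`φ(u) = max(0, 1 - yu)` with `y ∈ {±1}`: for dual-feasible `a, b` and any
`u` with `-b ∈ ∂φ(u)`,
`φ*(-a) - φ*(-b) + u(a-b) = |uy - 1| |a-b| ≥ |uy - 1| (a-b)²`. -/
theorem hinge_refined_strong_convexity
    (y : ℝ) (hy : y = 1 ∨ y = -1)
    (φ : ℝ → ℝ) (hφ : φ = fun u => max 0 (1 - y * u))
    (hconj : ∀ a : ℝ, a * y ∈ Set.Icc (0 : ℝ) 1 → fconj φ (-a) = -(a * y))
    (a b u : ℝ)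
    (ha : a * y ∈ Set.Icc (0 : ℝ) 1) (hb : b * y ∈ Set.Icc (0 : ℝ) 1)
    (hu : IsSubgrad φ u (-b)) :
    fconj φ (-a) - fconj φ (-b) + u * (a - b) = |u * y - 1| * |a - b|
    ∧ |u * y - 1| * (a - b) ^ 2 ≤ |u * y - 1| * |a - b| := by
  have hyy : y * y = 1 := by rcases hy with rfl | rfl <;> norm_num
  have habs_y : |y| = 1 := by rcases hy with rfl | rfl <;> norm_num
  subst hφ
  have hgap := hinge_margin_mul_dual_gap_nonneg hyy ha hu
  have hab : |a - b| ≤ 1 := by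
    have hscale : |a - b| = |a * y - b * y| := by rw [← sub_mul, abs_mul, habs_y, mul_one]
    rw [hscale]
    exact abs_sub_le_of_nonneg_of_le ha.1 ha.2 hb.1 hb.2
  constructor
  · calc fconj _ (-a) - fconj _ (-b) + u * (a - b)
        = (u * y - 1) * (y * (a - b)) := by
          rw [hconj a ha, hconj b hb]
          linear_combination (-(u * (a - b))) * hyy
      _ = |u * y - 1| * |a - b| := by
          rw [← abs_of_nonneg hgap, abs_mul, abs_mul, habs_y, one_mul]
  · gcongr
    rw [← sq_abs]
    exact sq_le (abs_nonneg _) hab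
end

section
/- Refined bound on the variance term (Lemma 6): Suppose each φ_i is L-Lipschitz and ‖x_i‖ ≤ 1 for all i, and let γ_1,…,γ_n ≥ 0. Let α, α* ∈ ℝⁿ with φ_i*(−α_i) < ∞ and φ_i*(−α*_i) < ∞ for all i. Define N(u) = #{i : γ_i < u} and, for s ∈ (0,1], G*(s) = (1/n)∑_{i=1}^n (‖x_i‖² − γ_i λ n / s)(α*_i − α_i)². Then G*(s) ≤ 4L² · N(s/(λn)) / n. -/
/-!
If `φ` is `L`-Lipschitz, `z u - φ z ≥ z u - L |z| - φ 0` is unbounded above as soon as `|u| > L`;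
so dual feasibility forces `|αᵢ|, |α*ᵢ| ≤ L` and hence `(α*ᵢ - αᵢ)² ≤ 4L²`. The coefficient
`‖xᵢ‖² - γᵢ λ n / s` is at most `1`, and it is `≤ 0` once `γᵢ ≥ s / (λ n)`; so only the
`N(s / (λ n))` indices with `γᵢ < s / (λ n)` contribute, each at most `4L²`.
-/

open scoped BigOperators RealInnerProductSpace
open Finset

lemma FiniteConj.abs_le {φ : ℝ → ℝ} {L u : ℝ}
    (hL : ∀ a b : ℝ, |φ a - φ b| ≤ L * |a - b|) (hu : FiniteConj φ u) : |u| ≤ L := by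
  by_contra! hLu
  obtain ⟨M, hM⟩ := hu
  have hbdd : ∀ z, z * u - L * |z| - φ 0 ≤ M := fun z => by
    have := (_root_.abs_le.1 (hL z 0)).2
    have := hM ⟨z, rfl⟩
    simp only [sub_zero] at *
    linarith
  set t := (M + φ 0 + 1) / (|u| - L)
  have ht : t * (|u| - L) = M + φ 0 + 1 := div_mul_cancel₀ _ (sub_pos.2 hLu).ne'
  have ht0 : 0 ≤ t :=
    div_nonneg (by linarith [show -φ 0 ≤ M by simpa using hbdd 0]) (sub_pos.2 hLu).le
  rcases le_or_gt 0 u with hu | hu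
  · have := hbdd t
    rw [abs_of_nonneg ht0] at this
    rw [abs_of_nonneg hu] at ht
    linarith
  · have := hbdd (-t)
    rw [abs_neg, abs_of_nonneg ht0] at this
    rw [abs_of_neg hu] at ht
    linarith

lemma Feas.abs_le {n : ℕ} {φ : Fin n → ℝ → ℝ} {α : Fin n → ℝ} {L : ℝ}
    (hL : ∀ i, ∀ a b : ℝ, |φ i a - φ i b| ≤ L * |a - b|) (hα : Feas φ α) (i : Fin n) :
    |α i| ≤ L := by
  simpa using (hα i).abs_le (hL i)

lemma sq_sub_le_of_abs_le {a b L : ℝ} (ha : |a| ≤ L) (hb : |b| ≤ L) :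
    (a - b) ^ 2 ≤ 4 * L ^ 2 := by
  have := (abs_sub a b).trans (add_le_add ha hb)
  nlinarith [sq_abs (a - b), abs_nonneg (a - b)]

lemma sub_mul_div_mul_le_ite {a γ t s δ C : ℝ} (ha : a ≤ 1) (hγ : 0 ≤ γ) (ht : 0 < t)
    (hs : 0 < s) (hδ : 0 ≤ δ) (hδC : δ ≤ C) :
    (a - γ * t / s) * δ ≤ if γ < s / t then C else 0 := by
  have hγts : 0 ≤ γ * t / s := by positivity
  split_ifs with hγ'
  · nlinarith
  · have : 1 ≤ γ * t / s := by
      rw [le_div_iff₀ hs]; rw [not_lt, div_le_iff₀ ht] at hγ'; linarith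
    nlinarith

lemma sum_le_mul_card_of_le_ite {ι : Type*} [Fintype ι] {f : ι → ℝ} {p : ι → Prop}
    [DecidablePred p] {C : ℝ} (h : ∀ i, f i ≤ if p i then C else 0) :
    ∑ i, f i ≤ C * Nat.card {i // p i} := by
  calc ∑ i, f i ≤ ∑ i, if p i then C else 0 := sum_le_sum fun i _ => h i
    _ = C * Nat.card {i // p i} := by
      rw [sum_ite, sum_const, sum_const_zero, Nat.card_eq_fintype_card,
        Fintype.card_subtype]
      simp [mul_comm]

theorem refined_variance_bound_general
    (n d : ℕ)
    (x : Fin n → EuclideanSpace ℝ (Fin d))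
    (φ : Fin n → ℝ → ℝ)
    (lam : ℝ) (hlam : 0 < lam)
    (L : ℝ) (hL : ∀ i, ∀ a b : ℝ, |φ i a - φ i b| ≤ L * |a - b|)
    (hx : ∀ i, ‖x i‖ ≤ 1)
    (γs : Fin n → ℝ) (hγs : ∀ i, 0 ≤ γs i)
    (α αstar : Fin n → ℝ) (hα : Feas φ α) (hαstar : Feas φ αstar)
    (s : ℝ) (hs0 : 0 < s) :
    (1 / (n : ℝ)) * ∑ i, (‖x i‖ ^ 2 - γs i * lam * (n : ℝ) / s) * (αstar i - α i) ^ 2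
      ≤ 4 * L ^ 2 * (Nat.card {i : Fin n // γs i < s / (lam * n)} : ℝ) / n := by
  have hterm : ∀ i, (‖x i‖ ^ 2 - γs i * lam * n / s) * (αstar i - α i) ^ 2
      ≤ if γs i < s / (lam * n) then 4 * L ^ 2 else 0 := fun i => by
    have hn : (0 : ℝ) < n := Nat.cast_pos.2 i.pos
    rw [mul_assoc (γs i)]
    exact sub_mul_div_mul_le_ite (pow_le_one₀ (norm_nonneg _) (hx i)) (hγs i) (by positivity) hs0
      (sq_nonneg _) (sq_sub_le_of_abs_le (hαstar.abs_le hL i) (hα.abs_le hL i))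
  rw [one_div_mul_eq_div]
  exact div_le_div_of_nonneg_right (sum_le_mul_card_of_le_ite hterm) n.cast_nonneg

/-- Lemma 6 (refined variance bound): if each `φᵢ` is `L`-Lipschitz, `‖xᵢ‖ ≤ 1`,
and `γᵢ ≥ 0`, then for dual-feasible `α, α*` and `s ∈ (0,1]`,
`G*(s) = (1/n) ∑ᵢ (‖xᵢ‖² - γᵢ λ n/s)(α*ᵢ - αᵢ)² ≤ 4L² N(s/(λn))/n`,
where `N(u) = #{i : γᵢ < u}`. -/
theorem refined_variance_bound
    (n d : ℕ) (hn : 1 ≤ n)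
    (x : Fin n → EuclideanSpace ℝ (Fin d))
    (φ : Fin n → ℝ → ℝ) (hconv : ∀ i, ConvexOn ℝ Set.univ (φ i))
    (lam : ℝ) (hlam : 0 < lam)
    (L : ℝ) (hL : ∀ i, ∀ a b : ℝ, |φ i a - φ i b| ≤ L * |a - b|)
    (hx : ∀ i, ‖x i‖ ≤ 1)
    (γs : Fin n → ℝ) (hγs : ∀ i, 0 ≤ γs i)
    (α αstar : Fin n → ℝ) (hα : Feas φ α) (hαstar : Feas φ αstar)
    (s : ℝ) (hs0 : 0 < s) (hs1 : s ≤ 1) :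
    (1 / (n : ℝ)) * ∑ i, (‖x i‖ ^ 2 - γs i * lam * (n : ℝ) / s) * (αstar i - α i) ^ 2
      ≤ 4 * L ^ 2 * (Nat.card {i : Fin n // γs i < s / (lam * n)} : ℝ) / n :=
  refined_variance_bound_general n d x φ lam hlam L hL hx γs hγs α αstar hα hαstar s hs0
end
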